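/- Fix integers r ≥ 1, 0 ≤ k ≤ r−1 and m ≥ 0. Then there exist a polynomial q ∈ ℂ[z] and ε > 0 such that for all z ∈ ℂ with |z| < ε, ξ_m^{r,k}(z·e^{−z^r}) = q(z)/(1−r z^r)^{2m+1}, where the series ξ_m^{r,k} converges absolutely at x = z·e^{−z^r}. -/

import Mathlib

/-- The j-th term of the auxiliary series ξ_ℓ^{r,k}(x): for k ≥ 1 it is
(rj+k)^{j+ℓ}/j!·x^{rj+k} (j ≥ 0), and for k = 0 it is (rj)^{j+ℓ}/j!·x^{rj} (j ≥ 1,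
the term for j = 0 being 0). -/
noncomputable def xiTerm (r k : ℕ) (ℓ : ℤ) (x : ℂ) (j : ℕ) : ℂ :=
  if k = 0 ∧ j = 0 then 0
  else ((r * j + k : ℕ) : ℂ) ^ ((j : ℤ) + ℓ) / (Nat.factorial j : ℂ) * x ^ (r * j + k)

/-!
Put `x = z e^{-z^r}` and expand every factor `e^{-(rj+k) z^r}` of `x^{rj+k}`. The resulting double
series converges absolutely for small `z`, and summing it along antidiagonals gives
`ξ_m^{r,k}(x) = z^k ∑_N P_m(N) (r z^r)^N`, where `N! r^N P_m(N)` is the `N`-th finite difference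
`∑_j (-1)^{N-j} C(N,j) (rj+k)^{N+m}`. A recurrence for these finite differences gives `P_0 = 1` and
`P_{m+1}(N) = ∑_{n ≤ N} (rn+k) P_m(n)`, so `P_m` is a linear combination of the sequences
`N ↦ C(N+s, s)` with `s ≤ 2m`; since `∑_N C(N+s, s) u^N = (1-u)^{-(s+1)}`, the series in `u = r z^r`
is a polynomial divided by `(1-u)^{2m+1}`.
-/

open Finset Polynomial Nat

section AltPowSum

variable {R : Type*} [CommRing R]

def altPowSum (a b : R) (N e : ℕ) : R :=
  ∑ j ∈ range (N + 1), (-1) ^ (N - j) * N.choose j * (a * j + b) ^ e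

@[simp]
lemma altPowSum_zero_left (a b : R) (e : ℕ) : altPowSum a b 0 e = b ^ e := by
  simp [altPowSum]

lemma altPowSum_zero_right (a b : R) {N : ℕ} (hN : N ≠ 0) : altPowSum a b N 0 = 0 := by
  simpa [altPowSum, zero_pow hN, mul_comm] using (add_pow (1 : R) (-1) N).symm

lemma altPowSum_succ_succ (a b : R) (N e : ℕ) :
    altPowSum a b (N + 1) (e + 1) =
      (a * (N + 1) + b) * altPowSum a b (N + 1) e + a * (N + 1) * altPowSum a b N e := by
  -- `a j + b = (a (N + 1) + b) - a (N + 1 - j)` and `C(N+1, j) (N + 1 - j) = (N + 1) C(N, j)`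
  have hsplit : ∀ j ∈ range (N + 2),
      (-1 : R) ^ (N + 1 - j) * (N + 1).choose j * (a * j + b) ^ (e + 1)
        = (a * (N + 1) + b) * ((-1) ^ (N + 1 - j) * (N + 1).choose j * (a * j + b) ^ e)
          + a * (N + 1) * ((-1) ^ (N - j) * N.choose j * (a * j + b) ^ e) := by
    intro j hj
    rcases Nat.lt_or_ge N j with hNj | hjN
    · obtain rfl : j = N + 1 := by simp at hj; omega
      simp [pow_succ, mul_comm]
    · have hchoose : ((N + 1).choose j : R) * (((N - j : ℕ) : R) + 1) = N.choose j * (N + 1) := by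
        have := congrArg (Nat.cast : ℕ → R) (Nat.choose_mul_succ_eq N j)
        rw [Nat.sub_add_comm hjN] at this
        push_cast at this
        exact this.symm
      push_cast [Nat.cast_sub hjN] at hchoose
      rw [Nat.sub_add_comm hjN, pow_succ, pow_succ]
      linear_combination (-1) ^ (N - j) * (a * j + b) ^ e * a * hchoose
  rw [altPowSum, sum_congr rfl hsplit, sum_add_distrib, ← mul_sum, ← mul_sum, altPowSum,
    altPowSum]
  simp [sum_range_succ _ (N + 1)]

lemma altPowSum_eq_zero_of_lt (a b : R) {N e : ℕ} (h : e < N) : altPowSum a b N e = 0 := by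
  induction e generalizing N with
  | zero => exact altPowSum_zero_right a b (by omega)
  | succ e ih =>
    obtain ⟨N, rfl⟩ := Nat.exists_eq_add_of_lt (Nat.zero_lt_of_lt h)
    rw [zero_add, altPowSum_succ_succ, ih (by omega), ih (by omega)]
    ring

lemma altPowSum_self (a b : R) (N : ℕ) : altPowSum a b N N = N ! * a ^ N := by
  induction N with
  | zero => simp
  | succ N ih =>
    rw [altPowSum_succ_succ, ih, altPowSum_eq_zero_of_lt a b (Nat.lt_succ_self N), factorial_succ]
    push_cast
    ring

def lambertCoeff (a b : R) : ℕ → ℕ → R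
  | 0, _ => 1
  | m + 1, N => ∑ n ∈ range (N + 1), (a * n + b) * lambertCoeff a b m n

lemma lambertCoeff_succ_succ (a b : R) (m N : ℕ) :
    lambertCoeff a b (m + 1) (N + 1) =
      lambertCoeff a b (m + 1) N + (a * (N + 1) + b) * lambertCoeff a b m (N + 1) := by
  simp [lambertCoeff, sum_range_succ _ (N + 1)]

lemma altPowSum_add_eq_lambertCoeff (a b : R) (m N : ℕ) :
    altPowSum a b N (N + m) = N ! * a ^ N * lambertCoeff a b m N := by
  induction m generalizing N with
  | zero => simp [lambertCoeff, altPowSum_self]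
  | succ m ihm =>
    induction N with
    | zero =>
      have h0 := ihm 0
      simp only [altPowSum_zero_left, zero_add, factorial_zero, cast_one, pow_zero, one_mul] at h0
      simp [lambertCoeff, ← h0, pow_succ, mul_comm]
    | succ N ihN =>
      rw [show N + 1 + (m + 1) = N + 1 + m + 1 by ring, altPowSum_succ_succ, ihm,
        show N + 1 + m = N + (m + 1) by ring, ihN, lambertCoeff_succ_succ, factorial_succ]
      push_cast
      ring

end AltPowSum

section BinomSpan

variable (R : Type*) [CommRing R]

def binomSeq (s : ℕ) : ℕ → R := fun N => ((N + s).choose s : R)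

/-- The sequences given by polynomials of degree `≤ D`, in the binomial basis. -/
def binomSpan (D : ℕ) : Submodule R (ℕ → R) :=
  Submodule.span R (binomSeq R '' Set.Iic D)

variable {R}

lemma binomSeq_mem_binomSpan {s D : ℕ} (h : s ≤ D) : binomSeq R s ∈ binomSpan R D :=
  Submodule.subset_span ⟨s, h, rfl⟩

lemma binomSpan_le_comap {D D' : ℕ} {L : (ℕ → R) →ₗ[R] (ℕ → R)}
    (h : ∀ s ≤ D, L (binomSeq R s) ∈ binomSpan R D') :
    binomSpan R D ≤ (binomSpan R D').comap L :=
  Submodule.span_le.mpr (by rintro _ ⟨s, hs, rfl⟩; exact h s hs)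

lemma mul_mem_binomSpan (a b : R) {D : ℕ} {f : ℕ → R} (hf : f ∈ binomSpan R D) :
    (fun N => (a * N + b) * f N) ∈ binomSpan R (D + 1) := by
  refine binomSpan_le_comap (D' := D + 1) (L := LinearMap.mulLeft R fun N : ℕ => a * N + b)
    (fun s hs => ?_) hf
  have hgen : (fun N : ℕ => a * N + b) * binomSeq R s
      = b • binomSeq R s + (a * (s + 1)) • (binomSeq R (s + 1) - binomSeq R s) := by
    ext N
    have h := congrArg (Nat.cast : ℕ → R) (Nat.add_one_mul_choose_eq (N + s) s)
    push_cast at h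
    simp only [binomSeq, Pi.mul_apply, Pi.add_apply, Pi.smul_apply, Pi.sub_apply, smul_eq_mul,
      ← add_assoc]
    linear_combination a * h
  simp only [LinearMap.mulLeft_apply, hgen]
  exact add_mem (Submodule.smul_mem _ _ (binomSeq_mem_binomSpan (by omega)))
    (Submodule.smul_mem _ _ (sub_mem (binomSeq_mem_binomSpan (by omega))
      (binomSeq_mem_binomSpan (by omega))))

lemma partialSum_mem_binomSpan {D : ℕ} {f : ℕ → R} (hf : f ∈ binomSpan R D) :
    (fun N => ∑ n ∈ range (N + 1), f n) ∈ binomSpan R (D + 1) := by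
  have hL := binomSpan_le_comap (D' := D + 1)
    (L := LinearMap.pi fun N => ∑ n ∈ range (N + 1), LinearMap.proj n) ?_ hf
  · rw [Submodule.mem_comap] at hL
    convert hL using 1
    ext N
    simp
  intro s hs
  convert binomSeq_mem_binomSpan (R := R) (Nat.succ_le_succ hs) using 1
  ext N
  simp [binomSeq, ← Nat.cast_sum, Nat.sum_range_add_choose, add_assoc]

lemma lambertCoeff_mem_binomSpan (a b : R) (m : ℕ) : lambertCoeff a b m ∈ binomSpan R (2 * m) := by
  induction m with
  | zero =>
    convert binomSeq_mem_binomSpan (R := R) (le_refl 0)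
    ext
    simp [lambertCoeff, binomSeq]
  | succ m ih => exact partialSum_mem_binomSpan (mul_mem_binomSpan a b ih)

lemma exists_hasSum_mul_geometric_of_mem_binomSpan {𝕜 : Type*} [NormedField 𝕜] [CompleteSpace 𝕜]
    {D : ℕ} {f : ℕ → 𝕜} (hf : f ∈ binomSpan 𝕜 D) :
    ∃ Q : 𝕜[X], ∀ u : 𝕜, ‖u‖ < 1 →
      HasSum (fun N => f N * u ^ N) (Q.eval u / (1 - u) ^ (D + 1)) := by
  induction hf using Submodule.span_induction with
  | mem g hg =>
    obtain ⟨s, hs, rfl⟩ := hg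
    refine ⟨(1 - X) ^ (D - s), fun u hu => ?_⟩
    have hu1 : 1 - u ≠ 0 := sub_ne_zero.mpr fun h => by simp [← h] at hu
    have hval : ((1 - X : 𝕜[X]) ^ (D - s)).eval u / (1 - u) ^ (D + 1) = 1 / (1 - u) ^ (s + 1) := by
      rw [eval_pow, eval_sub, eval_one, eval_X, div_eq_div_iff (pow_ne_zero _ hu1)
        (pow_ne_zero _ hu1), one_mul, ← pow_add]
      congr 1
      simp only [Set.mem_Iic] at hs
      omega
    rw [hval]
    exact hasSum_choose_mul_geometric_of_norm_lt_one s hu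
  | zero => exact ⟨0, fun u _ => by simp⟩
  | add f g _ _ hf hg =>
    obtain ⟨Q, hQ⟩ := hf
    obtain ⟨Q', hQ'⟩ := hg
    exact ⟨Q + Q', fun u hu => by simpa [add_mul, add_div] using (hQ u hu).add (hQ' u hu)⟩
  | smul c f _ hf =>
    obtain ⟨Q, hQ⟩ := hf
    exact ⟨C c * Q, fun u hu => by simpa [mul_assoc, mul_div_assoc] using (hQ u hu).mul_left c⟩

end BinomSpan

theorem HasSum.sum_antidiagonal {α : Type*} [AddCommMonoid α] [TopologicalSpace α]
    [ContinuousAdd α] [RegularSpace α] {f : ℕ × ℕ → α} {a : α} (h : HasSum f a) :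
    HasSum (fun n => ∑ p ∈ antidiagonal n, f p) a :=
  ((Finset.HasAntidiagonal.sigmaAntidiagonalEquivProd (A := ℕ)).hasSum_iff.mpr h).sigma fun n => by
    rw [← Finset.sum_coe_sort]
    exact hasSum_fintype _

section LambertSeries

variable (r k m : ℕ)

noncomputable def lambertTerm (x : ℂ) (j : ℕ) : ℂ :=
  ((r * j + k : ℕ) : ℂ) ^ (j + m) / j ! * x ^ (r * j + k)

/-- Substituting `x = z e^{-z^r}` in `lambertTerm` and expanding `e^{-(rj+k) z^r}`. -/
noncomputable def lambertDoubleTerm (z : ℂ) (p : ℕ × ℕ) : ℂ :=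
  lambertTerm r k m z p.1 * ((-((r * p.1 + k : ℕ) : ℂ) * z ^ r) ^ p.2 / p.2 !)

lemma hasSum_lambertDoubleTerm_fiber (z : ℂ) (j : ℕ) :
    HasSum (fun i => lambertDoubleTerm r k m z (j, i))
      (lambertTerm r k m (z * Complex.exp (-z ^ r)) j) := by
  have hexp := NormedSpace.expSeries_div_hasSum_exp (-((r * j + k : ℕ) : ℂ) * z ^ r)
  rw [← Complex.exp_eq_exp_ℂ] at hexp
  have hx : lambertTerm r k m (z * Complex.exp (-z ^ r)) j
      = lambertTerm r k m z j * Complex.exp (-((r * j + k : ℕ) : ℂ) * z ^ r) := by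
    simp only [lambertTerm, mul_pow, ← Complex.exp_nat_mul, mul_neg, neg_mul]
    ring
  have hfun : (fun i => lambertDoubleTerm r k m z (j, i))
      = fun i => lambertTerm r k m z j * ((-((r * j + k : ℕ) : ℂ) * z ^ r) ^ i / i !) := rfl
  rw [hx, hfun]
  exact hexp.mul_left _

lemma sum_antidiagonal_lambertDoubleTerm (z : ℂ) (N : ℕ) :
    ∑ p ∈ antidiagonal N, lambertDoubleTerm r k m z p
      = z ^ k * ((r : ℂ) * z ^ r) ^ N * lambertCoeff (r : ℂ) k m N := by
  have hterm : ∀ j ∈ range (N + 1), lambertDoubleTerm r k m z (j, N - j)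
      = z ^ (r * N + k) / N ! * ((-1) ^ (N - j) * N.choose j * ((r : ℂ) * j + k) ^ (N + m)) := by
    intro j hj
    obtain ⟨i, rfl⟩ := Nat.exists_eq_add_of_le (Nat.lt_succ_iff.mp (mem_range.mp hj))
    have hjf : (j ! : ℂ) ≠ 0 := Nat.cast_ne_zero.mpr j.factorial_ne_zero
    have hif : (i ! : ℂ) ≠ 0 := Nat.cast_ne_zero.mpr i.factorial_ne_zero
    have hjif : ((j + i) ! : ℂ) ≠ 0 := Nat.cast_ne_zero.mpr (j + i).factorial_ne_zero
    rw [Nat.cast_choose ℂ (Nat.le_add_right j i), Nat.add_sub_cancel_left]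
    simp only [lambertDoubleTerm, lambertTerm]
    rw [neg_mul, neg_pow, mul_pow, ← pow_mul]
    field_simp
    push_cast
    ring
  rw [Nat.sum_antidiagonal_eq_sum_range_succ_mk, sum_congr rfl hterm, ← mul_sum, ← altPowSum,
    altPowSum_add_eq_lambertCoeff]
  have hN : (N ! : ℂ) ≠ 0 := Nat.cast_ne_zero.mpr N.factorial_ne_zero
  field_simp
  ring

lemma summable_lambertMajorant (hr : 1 ≤ r) {c : ℝ} (hc0 : 0 ≤ c) (hc : Real.exp 1 * c < 1) :
    Summable fun j : ℕ => ((r * j + k : ℕ) : ℝ) ^ (j + m) / j ! * c ^ (r * j + k) := by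
  have hgeom : Summable fun n : ℕ => (n : ℝ) ^ m * (Real.exp 1 * c) ^ n :=
    summable_pow_mul_geometric_of_norm_lt_one m
      (by rwa [Real.norm_of_nonneg (by positivity)])
  have hinj : Function.Injective fun j : ℕ => r * j + k := fun a b h => by
    simpa [Nat.mul_left_cancel_iff (by omega : 0 < r)] using h
  refine (hgeom.comp_injective hinj).of_nonneg_of_le (fun j => by positivity) fun j => ?_
  set n := r * j + k
  have hexp : (n : ℝ) ^ j / j ! ≤ Real.exp 1 ^ n := by
    rw [Real.exp_one_pow]
    exact Real.pow_div_factorial_le_exp _ (by positivity) j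
  calc (n : ℝ) ^ (j + m) / j ! * c ^ n = (n : ℝ) ^ m * ((n : ℝ) ^ j / j ! * c ^ n) := by ring
    _ ≤ (n : ℝ) ^ m * (Real.exp 1 ^ n * c ^ n) := by gcongr
    _ = (n : ℝ) ^ m * (Real.exp 1 * c) ^ n := by rw [mul_pow]

lemma summable_norm_lambertDoubleTerm (hr : 1 ≤ r) {z : ℂ}
    (hz : Real.exp 1 * (‖z‖ * Real.exp (‖z‖ ^ r)) < 1) :
    Summable fun p => ‖lambertDoubleTerm r k m z p‖ := by
  have hfiber : ∀ j, HasSum (fun i => ‖lambertDoubleTerm r k m z (j, i)‖)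
      (((r * j + k : ℕ) : ℝ) ^ (j + m) / j ! * (‖z‖ * Real.exp (‖z‖ ^ r)) ^ (r * j + k)) := by
    intro j
    have hexp := NormedSpace.expSeries_div_hasSum_exp (((r * j + k : ℕ) : ℝ) * ‖z‖ ^ r)
    rw [← Real.exp_eq_exp_ℝ] at hexp
    have hnorm : (fun i => ‖lambertDoubleTerm r k m z (j, i)‖) = fun i =>
        ‖lambertTerm r k m z j‖ * ((((r * j + k : ℕ) : ℝ) * ‖z‖ ^ r) ^ i / i !) := by
      ext i
      simp only [lambertDoubleTerm, norm_mul, norm_div, norm_pow, norm_neg,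
        RCLike.norm_natCast]
    have hval : ((r * j + k : ℕ) : ℝ) ^ (j + m) / j ! * (‖z‖ * Real.exp (‖z‖ ^ r)) ^ (r * j + k)
        = ‖lambertTerm r k m z j‖ * Real.exp (((r * j + k : ℕ) : ℝ) * ‖z‖ ^ r) := by
      simp only [lambertTerm, norm_mul, norm_div, norm_pow, RCLike.norm_natCast, mul_pow,
        Real.exp_nat_mul]
      ring
    rw [hnorm, hval]
    exact hexp.mul_left _
  rw [summable_prod_of_nonneg fun _ => norm_nonneg _]
  refine ⟨fun j => (hfiber j).summable, ?_⟩
  simp_rw [fun j => (hfiber j).tsum_eq]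
  exact summable_lambertMajorant r k m hr (by positivity) hz

variable {r k m}

lemma summable_norm_lambertTerm (hr : 1 ≤ r) {z : ℂ}
    (hz : Real.exp 1 * (‖z‖ * Real.exp (‖z‖ ^ r)) < 1) :
    Summable fun j => ‖lambertTerm r k m (z * Complex.exp (-z ^ r)) j‖ := by
  have hD := summable_norm_lambertDoubleTerm r k m hr hz
  refine hD.prod.of_nonneg_of_le (fun _ => norm_nonneg _) fun j => ?_
  rw [← (hasSum_lambertDoubleTerm_fiber r k m z j).tsum_eq]
  exact norm_tsum_le_tsum_norm (hD.prod_factor j)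

lemma hasSum_lambertTerm (hr : 1 ≤ r) {z : ℂ}
    (hz : Real.exp 1 * (‖z‖ * Real.exp (‖z‖ ^ r)) < 1) {S : ℂ}
    (hS : HasSum (fun N => lambertCoeff (r : ℂ) k m N * ((r : ℂ) * z ^ r) ^ N) S) :
    HasSum (lambertTerm r k m (z * Complex.exp (-z ^ r))) (z ^ k * S) := by
  have hD := (summable_norm_lambertDoubleTerm r k m hr hz).of_norm.hasSum
  have htsum : ∑' p, lambertDoubleTerm r k m z p = z ^ k * S := by
    refine hD.sum_antidiagonal.unique ?_
    refine (hS.mul_left (z ^ k)).congr_fun fun N => ?_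
    rw [sum_antidiagonal_lambertDoubleTerm]
    ring
  rw [← htsum]
  exact hD.prod_fiberwise (hasSum_lambertDoubleTerm_fiber r k m z)

end LambertSeries

lemma xiTerm_eq_ite (r k m : ℕ) (x : ℂ) (j : ℕ) :
    xiTerm r k m x j = if k = 0 ∧ j = 0 then 0 else lambertTerm r k m x j := by
  rw [xiTerm, lambertTerm, show (j : ℤ) + m = (j + m : ℕ) by push_cast; ring, zpow_natCast]

lemma norm_xiTerm_le (r k m : ℕ) (x : ℂ) (j : ℕ) :
    ‖xiTerm r k m x j‖ ≤ ‖lambertTerm r k m x j‖ := by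
  rw [xiTerm_eq_ite]
  split_ifs <;> simp

lemma hasSum_xiTerm {r k m : ℕ} {x S : ℂ} (h : HasSum (lambertTerm r k m x) S) :
    HasSum (fun j => xiTerm r k m x j) (S - if k = 0 then 0 ^ m else 0) := by
  by_cases hk : k = 0
  · subst hk
    have hfun : (fun j => xiTerm r 0 m x j) = Function.update (lambertTerm r 0 m x) 0 0 := by
      ext j
      rw [xiTerm_eq_ite]
      by_cases hj : j = 0 <;> simp [hj]
    have h0 : lambertTerm r 0 m x 0 = 0 ^ m := by simp [lambertTerm]
    rw [if_pos rfl, hfun, sub_eq_neg_add, ← h0, ← zero_sub]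
    exact h.update 0 0
  · simpa [xiTerm_eq_ite, hk] using h

lemma lambert_radius_bounds {r : ℕ} (hr : 1 ≤ r) {ρ : ℝ} (hρ0 : 0 ≤ ρ)
    (hρ : ρ < ((r : ℝ) * Real.exp 2)⁻¹) :
    Real.exp 1 * (ρ * Real.exp (ρ ^ r)) < 1 ∧ (r : ℝ) * ρ ^ r < 1 := by
  have hr1 : (1 : ℝ) ≤ r := by exact_mod_cast hr
  have he2 : Real.exp 2 ≤ r * Real.exp 2 := le_mul_of_one_le_left (Real.exp_pos 2).le hr1
  have hA : 1 ≤ (r : ℝ) * Real.exp 2 := (Real.one_le_exp (by norm_num)).trans he2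
  have hρA : ρ * (r * Real.exp 2) < 1 := by
    have := mul_lt_mul_of_pos_right hρ (by positivity : (0 : ℝ) < r * Real.exp 2)
    rwa [inv_mul_cancel₀ (by positivity)] at this
  have hρ1 : ρ ≤ 1 := (le_mul_of_one_le_right hρ0 hA).trans hρA.le
  have hpow : ρ ^ r ≤ ρ := pow_le_of_le_one hρ0 hρ1 (by omega)
  constructor
  · calc Real.exp 1 * (ρ * Real.exp (ρ ^ r)) ≤ Real.exp 1 * (ρ * Real.exp 1) := by
          gcongr
          exact hpow.trans hρ1
      _ = ρ * Real.exp 2 := by rw [mul_comm, mul_assoc, ← Real.exp_add]; norm_num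
      _ ≤ ρ * (r * Real.exp 2) := by gcongr
      _ < 1 := hρA
  · calc (r : ℝ) * ρ ^ r ≤ r * ρ := by gcongr
      _ ≤ ρ * (r * Real.exp 2) := by
          nlinarith [mul_nonneg (mul_nonneg (Nat.cast_nonneg r) hρ0)
            (sub_nonneg.mpr (Real.one_le_exp (by norm_num : (0 : ℝ) ≤ 2)))]
      _ < 1 := hρA

theorem stmt11_general (r k m : ℕ) (hr : 1 ≤ r) :
    ∃ (q : Polynomial ℂ) (ε : ℝ), 0 < ε ∧ ∀ z : ℂ, ‖z‖ < ε →
      (Summable fun j : ℕ => ‖xiTerm r k (m : ℤ) (z * Complex.exp (-z ^ r)) j‖) ∧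
      HasSum (fun j : ℕ => xiTerm r k (m : ℤ) (z * Complex.exp (-z ^ r)) j)
        (Polynomial.eval z q / (1 - (r : ℂ) * z ^ r) ^ (2 * m + 1)) := by
  obtain ⟨Q, hQ⟩ :=
    exists_hasSum_mul_geometric_of_mem_binomSpan (lambertCoeff_mem_binomSpan (r : ℂ) (k : ℂ) m)
  refine ⟨X ^ k * Q.comp (C (r : ℂ) * X ^ r)
      - C (if k = 0 then 0 ^ m else 0) * (1 - C (r : ℂ) * X ^ r) ^ (2 * m + 1),
    ((r : ℝ) * Real.exp 2)⁻¹, by positivity, fun z hz => ?_⟩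
  obtain ⟨hc, hu⟩ := lambert_radius_bounds hr (norm_nonneg z) hz
  have hu' : ‖(r : ℂ) * z ^ r‖ < 1 := by simpa using hu
  have hden : (1 - (r : ℂ) * z ^ r) ^ (2 * m + 1) ≠ 0 :=
    pow_ne_zero _ (sub_ne_zero.mpr fun h => by simp [← h] at hu')
  refine ⟨(summable_norm_lambertTerm hr hc).of_nonneg_of_le (fun _ => norm_nonneg _)
    (norm_xiTerm_le r k m _), ?_⟩
  convert hasSum_xiTerm (hasSum_lambertTerm hr hc (hQ _ hu')) using 1
  simp only [eval_sub, eval_mul, eval_pow, eval_X, eval_comp, eval_C, eval_one]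
  field_simp

/-- for r ≥ 1, 0 ≤ k ≤ r−1 and m ≥ 0 there are a polynomial q and ε > 0
such that for ‖z‖ < ε the series ξ_m^{r,k} converges absolutely at x = z·e^{−z^r} and
ξ_m^{r,k}(z·e^{−z^r}) = q(z)/(1−rz^r)^{2m+1}. -/
theorem stmt11 (r k m : ℕ) (hr : 1 ≤ r) (hk : k ≤ r - 1) :
    ∃ (q : Polynomial ℂ) (ε : ℝ), 0 < ε ∧ ∀ z : ℂ, ‖z‖ < ε →
      (Summable fun j : ℕ => ‖xiTerm r k (m : ℤ) (z * Complex.exp (-z ^ r)) j‖) ∧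
      HasSum (fun j : ℕ => xiTerm r k (m : ℤ) (z * Complex.exp (-z ^ r)) j)
        (Polynomial.eval z q / (1 - (r : ℂ) * z ^ r) ^ (2 * m + 1)) :=
  stmt11_general r k m hr
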